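/- arXiv:1912.09662 — 4 statements merged into one kernel-verified Lean document; each statement's English description precedes it below -/
import Mathlib

section
/- Let T be a spanning tree of a graph G=(V,E), and for an edge f ∈ E∖E(T) let T_f denote the path in T between the endpoints of f. For F ⊆ E∖E(T), let T_F = ∪_{f∈F} T_f be the forest of tree edges covered by F. Then the graph T_F ∪ F is 2-edge-connected if and only if T_F is a tree (i.e., connected). -/
open SimpleGraph
variable {V : Type*}
noncomputable def treeWalk (T : SimpleGraph V) (hT : T.IsTree) (u v : V) : T.Walk u v :=
  (hT.existsUnique_path u v).choose
noncomputable def pathSupport (T : SimpleGraph V) (hT : T.IsTree) (f : V × V) : Set V :=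
  {v | v ∈ (treeWalk T hT f.1 f.2).support}
noncomputable def pathEdges (T : SimpleGraph V) (hT : T.IsTree) (f : V × V) : Set (Sym2 V) :=
  {e | e ∈ (treeWalk T hT f.1 f.2).edges}
noncomputable def unionPaths (T : SimpleGraph V) (hT : T.IsTree) (F : Set (V × V)) : SimpleGraph V :=
  SimpleGraph.fromEdgeSet (⋃ f ∈ F, pathEdges T hT f)
def pairGraph (F : Set (V × V)) : SimpleGraph V :=
  SimpleGraph.fromEdgeSet {e | ∃ f ∈ F, e = s(f.1, f.2)}
def ConnOn (H : SimpleGraph V) : Prop :=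
  H.support.Nonempty ∧ ∀ u ∈ H.support, ∀ v ∈ H.support, H.Reachable u v
def TwoEdgeConnected (H : SimpleGraph V) : Prop :=
  H.support.Nontrivial ∧ (∀ u ∈ H.support, ∀ v ∈ H.support, H.Reachable u v) ∧
    ∀ e ∈ H.edgeSet, ∀ u ∈ H.support, ∀ v ∈ H.support, (H.deleteEdges {e}).Reachable u v

/-!
Both graphs have the same vertices, since each `f ∈ F` joins two vertices of `T_f`. Every edge
`f` is bypassed by the path `T_f`, so `T_F ∪ F` is connected exactly when `T_F` is. Every edge of
`T_F` lies on some `T_f`, which together with `f` is a cycle of `T_F ∪ F`; hence deleting a single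
edge never separates the endpoints of an edge of `T_F`, and connectivity of `T_F` survives.
-/

namespace SimpleGraph

theorem Reachable.of_forall_adj_reachable {A B : SimpleGraph V}
    (h : ∀ x y, A.Adj x y → B.Reachable x y) {u v : V} (huv : A.Reachable u v) :
    B.Reachable u v := by
  rw [reachable_iff_reflTransGen] at huv ⊢
  exact Relation.ReflTransGen.lift' id
    (fun x y hxy => (reachable_iff_reflTransGen x y).1 (h x y hxy)) u v huv

theorem support_nontrivial_of_nonempty {H : SimpleGraph V} (h : H.support.Nonempty) :
    H.support.Nontrivial := by
  obtain ⟨v, w, hvw⟩ := h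
  exact ⟨v, ⟨w, hvw⟩, w, ⟨v, hvw.symm⟩, hvw.ne⟩

end SimpleGraph

section UnionPaths

variable {T : SimpleGraph V} {hT : T.IsTree} {F : Set (V × V)}

theorem treeWalk_isPath (T : SimpleGraph V) (hT : T.IsTree) (u v : V) :
    (treeWalk T hT u v).IsPath :=
  (hT.existsUnique_path u v).choose_spec.1

theorem mem_edgeSet_unionPaths {f : V × V} (hf : f ∈ F) {e : Sym2 V}
    (he : e ∈ (treeWalk T hT f.1 f.2).edges) : e ∈ (unionPaths T hT F).edgeSet := by
  rw [unionPaths, edgeSet_fromEdgeSet]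
  exact ⟨Set.mem_biUnion hf he, T.not_isDiag_of_mem_edgeSet (Walk.edges_subset_edgeSet _ he)⟩

theorem unionPaths_reachable {f : V × V} (hf : f ∈ F) :
    (unionPaths T hT F).Reachable f.1 f.2 :=
  ⟨(treeWalk T hT f.1 f.2).transfer _ fun _ => mem_edgeSet_unionPaths hf⟩

theorem exists_mem_edges_of_unionPaths_adj {x y : V} (h : (unionPaths T hT F).Adj x y) :
    ∃ f ∈ F, s(x, y) ∈ (treeWalk T hT f.1 f.2).edges := by
  rw [unionPaths, fromEdgeSet_adj, Set.mem_iUnion₂] at h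
  obtain ⟨⟨f, hf, he⟩, -⟩ := h
  exact ⟨f, hf, he⟩

theorem unionPaths_reachable_of_pairGraph_adj {u v : V} (h : (pairGraph F).Adj u v) :
    (unionPaths T hT F).Reachable u v := by
  rw [pairGraph, fromEdgeSet_adj] at h
  obtain ⟨⟨f, hf, huv⟩, -⟩ := h
  rcases Sym2.eq_iff.1 huv with ⟨rfl, rfl⟩ | ⟨rfl, rfl⟩
  · exact unionPaths_reachable hf
  · exact (unionPaths_reachable hf).symm

theorem support_unionPaths_sup_pairGraph :
    (unionPaths T hT F ⊔ pairGraph F).support = (unionPaths T hT F).support := by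
  refine (support_mono le_sup_left).antisymm' ?_
  rintro v ⟨w, hU | hP⟩
  · exact ⟨w, hU⟩
  · exact mem_support_of_reachable hP.ne (unionPaths_reachable_of_pairGraph_adj hP)

/-- The cycle is the tree path `T_f` closed up by `f` itself; it is a cycle because `f` is not a
tree edge. -/
theorem exists_isCycle_of_unionPaths_adj (hF : ∀ f ∈ F, ¬ T.Adj f.1 f.2) {x y : V}
    (h : (unionPaths T hT F).Adj x y) :
    ∃ (u : V) (c : (unionPaths T hT F ⊔ pairGraph F).Walk u u),
      c.IsCycle ∧ s(x, y) ∈ c.edges := by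
  obtain ⟨f, hf, hxy⟩ := exists_mem_edges_of_unionPaths_adj h
  have hne : f.1 ≠ f.2 := by
    obtain ⟨a, b⟩ := f
    rintro (rfl : a = b)
    rw [Walk.edges_eq_nil.2 (Walk.isPath_iff_nil.1 (treeWalk_isPath T hT a a))] at hxy
    exact List.not_mem_nil hxy
  have hP : (pairGraph F).Adj f.2 f.1 := by
    rw [pairGraph, fromEdgeSet_adj]
    exact ⟨⟨f, hf, Sym2.eq_swap⟩, hne.symm⟩
  let p := (treeWalk T hT f.1 f.2).transfer (unionPaths T hT F ⊔ pairGraph F)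
    fun _ he => edgeSet_mono le_sup_left (mem_edgeSet_unionPaths hf he)
  refine ⟨f.2, .cons (Or.inr hP) p, (Walk.cons_isCycle_iff _ _).2 ⟨?_, ?_⟩, ?_⟩
  · exact (treeWalk_isPath T hT f.1 f.2).transfer _
  · rw [Walk.edges_transfer]
    exact fun he => hF f hf ((Walk.adj_of_mem_edges _ he).symm)
  · rw [Walk.edges_cons, Walk.edges_transfer]
    exact List.mem_cons_of_mem _ hxy

theorem reachable_deleteEdges_of_unionPaths_adj (hF : ∀ f ∈ F, ¬ T.Adj f.1 f.2)
    (e : Sym2 V) {x y : V} (h : (unionPaths T hT F).Adj x y) :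
    ((unionPaths T hT F ⊔ pairGraph F).deleteEdges {e}).Reachable x y := by
  by_cases hxy : s(x, y) = e
  · subst hxy
    exact (adj_and_reachable_delete_edges_iff_exists_cycle.2
      (exists_isCycle_of_unionPaths_adj hF h)).2
  · exact Adj.reachable (deleteEdges_adj.2 ⟨Or.inl h, hxy⟩)

end UnionPaths

theorem stmt0_general (G T : SimpleGraph V) (hT : T.IsTree)
    (F : Set (V × V)) (hF : ∀ f ∈ F, G.Adj f.1 f.2 ∧ ¬ T.Adj f.1 f.2) :
    TwoEdgeConnected (unionPaths T hT F ⊔ pairGraph F) ↔ ConnOn (unionPaths T hT F) := by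
  rw [TwoEdgeConnected, ConnOn, support_unionPaths_sup_pairGraph]
  constructor
  · rintro ⟨hnt, hconn, -⟩
    refine ⟨hnt.nonempty, fun u hu v hv => (hconn u hu v hv).of_forall_adj_reachable ?_⟩
    rintro x y (hU | hP)
    · exact hU.reachable
    · exact unionPaths_reachable_of_pairGraph_adj hP
  · rintro ⟨hne, hconn⟩
    refine ⟨support_nontrivial_of_nonempty hne,
      fun u hu v hv => (hconn u hu v hv).mono le_sup_left,
      fun e _ u hu v hv => (hconn u hu v hv).of_forall_adj_reachable fun x y hxy => ?_⟩
    exact reachable_deleteEdges_of_unionPaths_adj (fun f hf => (hF f hf).2) e hxy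

theorem stmt0 (G T : SimpleGraph V) (hle : T ≤ G) (hT : T.IsTree)
    (F : Set (V × V)) (hF : ∀ f ∈ F, G.Adj f.1 f.2 ∧ ¬ T.Adj f.1 f.2) :
    TwoEdgeConnected (unionPaths T hT F ⊔ pairGraph F) ↔ ConnOn (unionPaths T hT F) :=
  stmt0_general G T hT F hF
end

section
/- Any edge-minimal 2-edge-connected graph (S,J) satisfies |S| ≤ |J| ≤ 2(|S|−1). -/
/-!
Every non-isolated vertex of a bridgeless graph has degree at least `2`, so the handshake lemma
gives `|S| ≤ |J|`. For the upper bound fix a spanning forest `T` of `H`. For an edge `f ∉ T` the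
graph `H - f` still contains `T`, so by minimality it has a bridge `e`, necessarily in `T`; that
is, `{f, e}` is a cut of `H`. The map `f ↦ e` is injective: if `{f₁, e}` and `{f₂, e}` are both
cuts, so is their symmetric difference `{f₁, f₂}`, which `T` avoids. Hence
`|J| ≤ 2 |E(T)| = 2 (|S| - 1)`.
-/

open SimpleGraph
variable {V : Type*}
namespace SimpleGraph

variable {G T : SimpleGraph V} {u v a b : V}

lemma Reachable.iff_of_forall_adj {p : V → Prop} (hp : ∀ ⦃x y⦄, G.Adj x y → (p x ↔ p y))
    (h : G.Reachable u v) : p u ↔ p v := by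
  obtain ⟨w⟩ := h
  induction w with
  | nil => rfl
  | cons hxy _ ih => exact (hp hxy).trans ih

lemma Reachable.reachable_iff (h : G.Reachable a b) : G.Reachable u a ↔ G.Reachable u b :=
  ⟨fun hua => hua.trans h, fun hub => hub.trans h.symm⟩

lemma le_deleteEdges_of_disjoint {s : Set (Sym2 V)} (hTG : T ≤ G) (hs : Disjoint T.edgeSet s) :
    T ≤ G.deleteEdges s :=
  deleteEdges_eq_self.mpr hs ▸ deleteEdges_mono hTG

lemma support_subset_of_reachable_eq (hT : T.Reachable = G.Reachable) :
    G.support ⊆ T.support := by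
  rintro x ⟨y, hxy⟩
  exact mem_support_of_reachable hxy.ne (hT ▸ hxy.reachable)

lemma IsAcyclic.ncard_edgeSet_add_one [Finite V] (hT : T.IsAcyclic) {s : Set V}
    (hs : s.Nonempty) (hsupp : T.support ⊆ s) (hreach : ∀ u ∈ s, ∀ v ∈ s, T.Reachable u v) :
    T.edgeSet.ncard + 1 = s.ncard := by
  classical
  have := Fintype.ofFinite V
  have := hs.to_subtype
  have hconn : (T.induce s).Connected := by
    refine (connected_iff _).mpr ⟨fun ⟨x, hx⟩ ⟨y, hy⟩ => ?_, inferInstance⟩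
    obtain ⟨w⟩ := hreach x hx y hy
    refine ⟨w.induce s fun z hz => ?_⟩
    by_cases hzx : z = x
    · exact hzx ▸ hx
    · exact hsupp (mem_support_of_reachable hzx ⟨(w.takeUntil z hz).reverse⟩)
  have htree : (T.induce s).IsTree := ⟨hconn, hT.induce s⟩
  rw [Set.ncard_eq_toFinset_card', ← edgeFinset,
    ← card_edgeFinset_induce_of_support_subset hsupp, htree.card_edgeFinset,
    Set.ncard_eq_toFinset_card', Set.toFinset_card]

lemma adj_deleteEdges_pair {g g' : Sym2 V} (hab : G.Adj a b) (hg : s(a, b) ≠ g)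
    (hg' : s(a, b) ≠ g') :
    (G.deleteEdges {g, g'}).Adj a b := by
  simp [hab, hg, hg']

/-- Both edges of a minimal cut `{s(a, b), g}` cross it. -/
lemma not_reachable_iff_reachable_deleteEdges_pair {g : Sym2 V}
    (hreach : (G.deleteEdges {g}).Reachable u v)
    (hcut : ¬(G.deleteEdges {s(a, b), g}).Reachable u v) :
    ¬((G.deleteEdges {s(a, b), g}).Reachable u a ↔
      (G.deleteEdges {s(a, b), g}).Reachable u b) := by
  intro hab
  refine hcut ((hreach.iff_of_forall_adj fun x y hxy => ?_).mp .rfl)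
  rw [deleteEdges_adj, Set.mem_singleton_iff] at hxy
  by_cases hxy' : s(x, y) = s(a, b)
  · rcases Sym2.eq_iff.mp hxy' with ⟨rfl, rfl⟩ | ⟨rfl, rfl⟩
    · exact hab
    · exact hab.symm
  · exact (adj_deleteEdges_pair hxy.1 hxy' hxy.2).reachable.reachable_iff

lemma not_reachable_deleteEdges_pair_of_cuts {e f : Sym2 V} {u₁ v₁ u₂ v₂ : V}
    (h₁ : G.IsEdgeReachable 2 u₁ v₁) (hcut₁ : ¬(G.deleteEdges {s(a, b), e}).Reachable u₁ v₁)
    (h₂ : G.IsEdgeReachable 2 u₂ v₂) (hcut₂ : ¬(G.deleteEdges {f, e}).Reachable u₂ v₂)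
    (hab : G.Adj a b) (he : s(a, b) ≠ e) (hf : s(a, b) ≠ f) :
    ¬(G.deleteEdges {s(a, b), f}).Reachable a b := by
  obtain ⟨x, y⟩ := e
  set K₁ := G.deleteEdges {s(a, b), s(x, y)}
  set K₂ := G.deleteEdges {f, s(x, y)}
  have flip₁ : ¬(K₁.Reachable u₁ a ↔ K₁.Reachable u₁ b) :=
    not_reachable_iff_reachable_deleteEdges_pair (isEdgeReachable_two.mp h₁ _) hcut₁
  have keep₂ : K₂.Reachable u₂ a ↔ K₂.Reachable u₂ b :=
    (adj_deleteEdges_pair hab hf he).reachable.reachable_iff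
  have flipe₁ : ¬(K₁.Reachable u₁ x ↔ K₁.Reachable u₁ y) := by
    simp only [K₁, Set.pair_comm (s(a, b))] at hcut₁ ⊢
    exact not_reachable_iff_reachable_deleteEdges_pair (isEdgeReachable_two.mp h₁ _) hcut₁
  have flipe₂ : ¬(K₂.Reachable u₂ x ↔ K₂.Reachable u₂ y) := by
    simp only [K₂, Set.pair_comm f] at hcut₂ ⊢
    exact not_reachable_iff_reachable_deleteEdges_pair (isEdgeReachable_two.mp h₂ _) hcut₂
  have flipe : (K₁.Reachable u₁ x ↔ K₂.Reachable u₂ x) ↔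
      (K₁.Reachable u₁ y ↔ K₂.Reachable u₂ y) := by
    rw [← not_iff.mp flipe₁, ← not_iff.mp flipe₂, not_iff_not]
  intro hreach
  -- the symmetric difference of the two sides: of the edges of `G`, only `s(a, b)` and `f` cross it
  have key := hreach.iff_of_forall_adj
    (p := fun z => (K₁.Reachable u₁ z ↔ K₂.Reachable u₂ z)) fun c d hcd => by
    obtain ⟨hcd, hcd'⟩ := deleteEdges_adj.mp hcd
    simp only [Set.mem_insert_iff, Set.mem_singleton_iff, not_or] at hcd'
    by_cases hcde : s(c, d) = s(x, y)
    · rcases Sym2.eq_iff.mp hcde with ⟨rfl, rfl⟩ | ⟨rfl, rfl⟩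
      exacts [flipe, flipe.symm]
    · rw [(adj_deleteEdges_pair hcd hcd'.1 hcde).reachable.reachable_iff,
        (adj_deleteEdges_pair hcd hcd'.2 hcde).reachable.reachable_iff]
  rw [keep₂] at key
  by_cases hb : K₂.Reachable u₂ b
  · exact flip₁ (by simpa only [hb, iff_true] using key)
  · exact flip₁ (by simpa only [hb, iff_false, not_iff_not] using key)

end SimpleGraph

variable {H : SimpleGraph V} {u v : V}

lemma TwoEdgeConnected.isEdgeReachable_two (h : TwoEdgeConnected H) (hu : u ∈ H.support)
    (hv : v ∈ H.support) : H.IsEdgeReachable 2 u v := by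
  refine SimpleGraph.isEdgeReachable_two.mpr fun e => ?_
  by_cases he : e ∈ H.edgeSet
  · exact h.2.2 e he u hu v hv
  · rw [deleteEdges_eq_self.mpr (Set.disjoint_singleton_right.mpr he)]
    exact h.2.1 u hu v hv

lemma TwoEdgeConnected.two_le_degree [Fintype (H.neighborSet v)] (h : TwoEdgeConnected H)
    (hv : v ∈ H.support) : 2 ≤ H.degree v := by
  obtain ⟨w, hw⟩ := hv
  exact (h.isEdgeReachable_two ⟨w, hw⟩ ⟨v, hw.symm⟩).le_degree hw.ne

lemma TwoEdgeConnected.ncard_support_le_ncard_edgeSet [Fintype V] (h : TwoEdgeConnected H) :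
    H.support.ncard ≤ H.edgeSet.ncard := by
  classical
  have hsum : 2 * H.support.ncard ≤ 2 * H.edgeSet.ncard := by
    rw [Set.ncard_eq_toFinset_card', Set.ncard_eq_toFinset_card', ← edgeFinset,
      ← sum_degrees_support_eq_twice_card_edges, mul_comm, ← smul_eq_mul, ← Finset.sum_const]
    exact Finset.sum_le_sum fun v hv => h.two_le_degree (Set.mem_toFinset.mp hv)
  omega

lemma TwoEdgeConnected.exists_cut_pair (h : TwoEdgeConnected H) {T : SimpleGraph V} (hTH : T ≤ H)
    (hT : T.Reachable = H.Reachable) {f : Sym2 V} (hfT : f ∉ T.edgeSet)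
    (hf : ¬TwoEdgeConnected (H.deleteEdges {f})) :
    ∃ e ∈ T.edgeSet, ∃ u ∈ H.support, ∃ v ∈ H.support,
      ¬(H.deleteEdges {f, e}).Reachable u v := by
  have hTf : T ≤ H.deleteEdges {f} :=
    le_deleteEdges_of_disjoint hTH (Set.disjoint_singleton_right.mpr hfT)
  have hsupp : (H.deleteEdges {f}).support = H.support :=
    (support_mono (deleteEdges_le _)).antisymm
      ((support_subset_of_reachable_eq hT).trans (support_mono hTf))
  have hreach : ∀ u ∈ H.support, ∀ v ∈ H.support, (H.deleteEdges {f}).Reachable u v :=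
    fun u hu v hv => (hT ▸ h.2.1 u hu v hv : T.Reachable u v).mono hTf
  have hbridge : ¬∀ e ∈ (H.deleteEdges {f}).edgeSet, ∀ u ∈ H.support, ∀ v ∈ H.support,
      ((H.deleteEdges {f}).deleteEdges {e}).Reachable u v :=
    fun hbridge => hf ⟨hsupp ▸ h.1, hsupp ▸ hreach, hsupp ▸ hbridge⟩
  simp only [deleteEdges_deleteEdges, Set.singleton_union, not_forall] at hbridge
  obtain ⟨e, -, u, hu, v, hv, hcut⟩ := hbridge
  refine ⟨e, ?_, u, hu, v, hv, hcut⟩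
  by_contra heT
  refine hcut ((hT ▸ h.2.1 u hu v hv : T.Reachable u v).mono (le_deleteEdges_of_disjoint hTH ?_))
  rw [Set.disjoint_insert_right, Set.disjoint_singleton_right]
  exact ⟨hfT, heT⟩

lemma TwoEdgeConnected.ncard_edgeSet_le [Fintype V] (h : TwoEdgeConnected H)
    (hmin : ∀ e ∈ H.edgeSet, ¬TwoEdgeConnected (H.deleteEdges {e})) :
    H.edgeSet.ncard ≤ 2 * (H.support.ncard - 1) := by
  obtain ⟨T, hTH, hTacyc, hT⟩ := H.exists_isAcyclic_reachable_eq_le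
  have hcardT : T.edgeSet.ncard + 1 = H.support.ncard :=
    hTacyc.ncard_edgeSet_add_one h.1.nonempty (support_mono hTH)
      fun u hu v hv => hT ▸ h.2.1 u hu v hv
  choose! φ hφT hφcut using fun f (hf : f ∈ H.edgeSet \ T.edgeSet) =>
    h.exists_cut_pair hTH hT hf.2 (hmin f hf.1)
  have hinj : Set.InjOn φ (H.edgeSet \ T.edgeSet) := by
    rintro ⟨a, b⟩ hf₁ f₂ hf₂ heq
    by_contra hne
    obtain ⟨u₁, hu₁, v₁, hv₁, hcut₁⟩ := hφcut _ hf₁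
    obtain ⟨u₂, hu₂, v₂, hv₂, hcut₂⟩ := hφcut _ hf₂
    rw [← heq] at hcut₂
    refine not_reachable_deleteEdges_pair_of_cuts (h.isEdgeReachable_two hu₁ hv₁) hcut₁
      (h.isEdgeReachable_two hu₂ hv₂) hcut₂ hf₁.1 (ne_of_mem_of_not_mem (hφT _ hf₁) hf₁.2).symm
      hne ?_
    refine (hT ▸ (hf₁.1 : H.Adj a b).reachable : T.Reachable a b).mono
      (le_deleteEdges_of_disjoint hTH ?_)
    rw [Set.disjoint_insert_right, Set.disjoint_singleton_right]
    exact ⟨hf₁.2, hf₂.2⟩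
  calc H.edgeSet.ncard = (H.edgeSet \ T.edgeSet).ncard + T.edgeSet.ncard :=
        (Set.ncard_sdiff_add_ncard_of_subset (edgeSet_mono hTH)).symm
    _ ≤ T.edgeSet.ncard + T.edgeSet.ncard := by
        grw [Set.ncard_le_ncard_of_injOn φ hφT hinj]
    _ = 2 * (H.support.ncard - 1) := by omega

/-- Any edge-minimal 2-edge-connected graph `(S, J)` satisfies `|S| ≤ |J| ≤ 2(|S| - 1)`,
where `S` is its vertex set (support) and `J` its edge set. -/
theorem stmt5 [Fintype V] (H : SimpleGraph V) (h2ec : TwoEdgeConnected H)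
    (hmin : ∀ e ∈ H.edgeSet, ¬ TwoEdgeConnected (H.deleteEdges {e})) :
    H.support.ncard ≤ H.edgeSet.ncard ∧ H.edgeSet.ncard ≤ 2 * (H.support.ncard - 1) :=
  ⟨h2ec.ncard_support_le_ncard_edgeSet, h2ec.ncard_edgeSet_le hmin⟩
end

section
/- Let T be a tree, F an edge set on V(T), s,t ∈ V(T), P the s–t path in T, and H the bipartite graph on F ∪ V(T) with edges {fv : v lies on T_f}. If t is not reachable from s in H, then there exists an edge on P that is covered by no f ∈ F. -/
open SimpleGraph
variable {V : Type*}
/-- The bipartite incidence graph on `F ⊕ V`. -/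
noncomputable def incGraph (T : SimpleGraph V) (hT : T.IsTree) (F : Set (V × V)) :
    SimpleGraph ((V × V) ⊕ V) :=
  SimpleGraph.fromRel (fun a b =>
    match a, b with
    | Sum.inl f, Sum.inr v => f ∈ F ∧ v ∈ pathSupport T hT f
    | _, _ => False)

lemma incGraph_adj_of_mem_pathSupport (T : SimpleGraph V) (hT : T.IsTree) {F : Set (V × V)}
    {f : V × V} {v : V} (hf : f ∈ F) (hv : v ∈ pathSupport T hT f) :
    (incGraph T hT F).Adj (Sum.inl f) (Sum.inr v) := by
  simp only [incGraph, fromRel_adj]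
  exact ⟨by simp, Or.inl ⟨hf, hv⟩⟩

lemma incGraph_reachable_of_mem_pathEdges (T : SimpleGraph V) (hT : T.IsTree)
    {F : Set (V × V)} {f : V × V} {u v : V} (hf : f ∈ F) (he : s(u, v) ∈ pathEdges T hT f) :
    (incGraph T hT F).Reachable (Sum.inr u) (Sum.inr v) :=
  have hu := incGraph_adj_of_mem_pathSupport T hT hf (Walk.fst_mem_support_of_mem_edges _ he)
  have hv := incGraph_adj_of_mem_pathSupport T hT hf (Walk.snd_mem_support_of_mem_edges _ he)
  hu.symm.reachable.trans hv.reachable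

lemma incGraph_reachable_of_forall_edges_covered (T : SimpleGraph V) (hT : T.IsTree)
    {F : Set (V × V)} {a b : V} (p : T.Walk a b)
    (hcov : ∀ e ∈ p.edges, ∃ f ∈ F, e ∈ pathEdges T hT f) :
    (incGraph T hT F).Reachable (Sum.inr a) (Sum.inr b) := by
  induction p with
  | nil => rfl
  | @cons u v w _ p ih =>
    obtain ⟨f, hf, he⟩ := hcov s(u, v) (by simp)
    exact (incGraph_reachable_of_mem_pathEdges T hT hf he).trans
      (ih fun e hep => hcov e (by simp [hep]))

/-- If `t` is not reachable from `s` in the auxiliary bipartite graph `H`, then some edge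
of the `s`–`t` tree path is covered by no `f ∈ F`. -/
theorem stmt9 (T : SimpleGraph V) (hT : T.IsTree) (F : Set (V × V)) (s t : V)
    (hnr : ¬ (incGraph T hT F).Reachable (Sum.inr s) (Sum.inr t)) :
    ∃ e ∈ (treeWalk T hT s t).edges, ∀ f ∈ F, e ∉ pathEdges T hT f := by
  by_contra! hcov
  exact hnr (incGraph_reachable_of_forall_edges_covered T hT (treeWalk T hT s t) hcov)
end

section
/- Let T be a tree on V, E a set of non-tree edges, and let e ∈ E with T_e the tree path of e. Suppose v ∈ V is a vertex not on T_e but adjacent in T (via tree edge uv) to a vertex u ∈ T_e, and suppose no edge f ∈ E satisfies both v ∈ T_f and V(T_f) ∩ V(T_e) ≠ ∅. Then no edge of E has its endpoints in distinct components of T − uv; i.e., uv is a bridge of the graph T ∪ E. -/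
open SimpleGraph
variable {V : Type*}
/-
A tree path `T_f` through the edge `uv` contains both `u` and `v`; since `u ∈ T_e`, such an
`f ∈ E'` is exactly what the hypothesis excludes. So every `f ∈ E'` is joined in `T − uv` by
its own tree path, and adding the edges of `E'` to `T − uv` merges no components. As `T` is
acyclic, `uv` is a bridge of `T`, hence also of `T ∪ E'`.
-/

namespace SimpleGraph

lemma Reachable.of_forall_adj_reachable_s17 {G H : SimpleGraph V}
    (hGH : ∀ a b, G.Adj a b → H.Reachable a b) {x y : V} (h : G.Reachable x y) :
    H.Reachable x y := by
  obtain ⟨p⟩ := h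
  induction p with
  | nil => exact Reachable.refl _
  | cons hadj _ ih => exact (hGH _ _ hadj).trans ih

lemma Reachable.of_sup_pairGraph {G : SimpleGraph V} {F : Set (V × V)}
    (hF : ∀ f ∈ F, G.Reachable f.1 f.2) {x y : V} (h : (G ⊔ pairGraph F).Reachable x y) :
    G.Reachable x y := by
  refine h.of_forall_adj_reachable_s17 fun a b hab => ?_
  rcases hab with hG | hP
  · exact hG.reachable
  · rw [pairGraph, fromEdgeSet_adj] at hP
    obtain ⟨⟨f, hf, hab⟩, -⟩ := hP
    rcases Sym2.eq_iff.mp hab with ⟨rfl, rfl⟩ | ⟨rfl, rfl⟩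
    · exact hF f hf
    · exact (hF f hf).symm

lemma Reachable.of_deleteEdges_sup_pairGraph {G : SimpleGraph V} {F : Set (V × V)}
    {s : Set (Sym2 V)} (hF : ∀ f ∈ F, (G.deleteEdges s).Reachable f.1 f.2) {x y : V}
    (h : ((G ⊔ pairGraph F).deleteEdges s).Reachable x y) :
    (G.deleteEdges s).Reachable x y := by
  rw [deleteEdges_sup] at h
  exact Reachable.of_sup_pairGraph hF (h.mono (sup_le_sup_left (deleteEdges_le s) _))

end SimpleGraph

lemma mem_pathSupport_of_mem_pathEdges {T : SimpleGraph V} {hT : T.IsTree} {f : V × V}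
    {a b : V} (h : s(a, b) ∈ pathEdges T hT f) :
    a ∈ pathSupport T hT f ∧ b ∈ pathSupport T hT f :=
  ⟨Walk.fst_mem_support_of_mem_edges _ h, Walk.snd_mem_support_of_mem_edges _ h⟩

lemma reachable_deleteEdges_of_notMem_pathEdges {T : SimpleGraph V} {hT : T.IsTree}
    {f : V × V} {d : Sym2 V} (h : d ∉ pathEdges T hT f) :
    (T.deleteEdges {d}).Reachable f.1 f.2 :=
  ((treeWalk T hT f.1 f.2).toDeleteEdge d h).reachable

theorem stmt17_general (T : SimpleGraph V) (hT : T.IsTree)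
    (E' : Set (V × V))
    (e : V × V) (u v : V)
    (hu : u ∈ pathSupport T hT e) (huv : T.Adj u v)
    (hno : ¬ ∃ f ∈ E', v ∈ pathSupport T hT f ∧
      (pathSupport T hT f ∩ pathSupport T hT e).Nonempty) :
    (∀ f ∈ E', (T.deleteEdges {s(u, v)}).Reachable f.1 f.2) ∧
      ¬ ((T ⊔ pairGraph E').deleteEdges {s(u, v)}).Reachable u v := by
  have hpaths : ∀ f ∈ E', (T.deleteEdges {s(u, v)}).Reachable f.1 f.2 := by
    intro f hf
    refine reachable_deleteEdges_of_notMem_pathEdges (hT := hT) fun huv_mem => hno ?_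
    obtain ⟨hu_f, hv_f⟩ := mem_pathSupport_of_mem_pathEdges huv_mem
    exact ⟨f, hf, hv_f, u, hu_f, hu⟩
  have hbridge : T.IsBridge s(u, v) := isAcyclic_iff_forall_adj_isBridge.mp hT.isAcyclic huv
  exact ⟨hpaths, fun h => hbridge (Reachable.of_deleteEdges_sup_pairGraph hpaths h)⟩

/-- If `v` lies off the tree path `T_e` but is joined by the tree edge `uv` to `u ∈ T_e`,
and no `f ∈ E'` satisfies both `v ∈ T_f` and `T_f ∩ T_e ≠ ∅`, then every `f ∈ E'` has
both endpoints in the same component of `T − uv`; hence `uv` is a bridge of `T ∪ E'`. -/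
theorem stmt17 (T : SimpleGraph V) (hT : T.IsTree)
    (E' : Set (V × V)) (hE' : ∀ f ∈ E', ¬ T.Adj f.1 f.2)
    (e : V × V) (he : e ∈ E') (u v : V)
    (hu : u ∈ pathSupport T hT e) (hv : v ∉ pathSupport T hT e) (huv : T.Adj u v)
    (hno : ¬ ∃ f ∈ E', v ∈ pathSupport T hT f ∧
      (pathSupport T hT f ∩ pathSupport T hT e).Nonempty) :
    (∀ f ∈ E', (T.deleteEdges {s(u, v)}).Reachable f.1 f.2) ∧
      ¬ ((T ⊔ pairGraph E').deleteEdges {s(u, v)}).Reachable u v :=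
  stmt17_general T hT E' e u v hu huv hno
end
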